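/- There exist absolute constants c, C > 0 such that for every p ∈ (0, 0.1], the function ψ(q) := φ(Φ⁻¹(q))/q is differentiable at p and its derivative ψ′(p) satisfies −C / (p √(ln(1/p))) ≤ ψ′(p) ≤ −c / (p √(ln(1/p))). -/

import Mathlib

open Real MeasureTheory Set Filter Topology

/-- Standard Gaussian density. -/
noncomputable def gphi (x : ℝ) : ℝ := (Real.sqrt (2 * Real.pi))⁻¹ * Real.exp (-(x ^ 2) / 2)

/-- Standard Gaussian CDF. -/
noncomputable def Phi (r : ℝ) : ℝ := ∫ x in Set.Iic r, gphi x

/-- Inverse of the standard Gaussian CDF (on (0,1)). -/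
noncomputable def PhiInv : ℝ → ℝ := Function.invFun Phi

/-- `ψ(p) := φ(Φ⁻¹(p)) / p`. -/
noncomputable def psiFun (p : ℝ) : ℝ := gphi (PhiInv p) / p

lemma gphi_pos (x : ℝ) : 0 < gphi x := by
  have h : 0 < Real.sqrt (2 * Real.pi) := Real.sqrt_pos.2 (by positivity)
  exact mul_pos (inv_pos.2 h) (Real.exp_pos _)

lemma gphi_eq (x : ℝ) : gphi x = (Real.sqrt (2 * Real.pi))⁻¹ * Real.exp (-(1/2) * x ^ 2) := by
  unfold gphi; ring_nf

lemma continuous_gphi : Continuous gphi := by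
  unfold gphi; continuity

lemma gphi_integrable : Integrable gphi := by
  have := (integrable_exp_neg_mul_sq (b := (1/2 : ℝ)) (by norm_num)).const_mul
    (Real.sqrt (2 * Real.pi))⁻¹
  refine this.congr ?_
  filter_upwards with x
  rw [gphi_eq]

lemma gphi_le_one (x : ℝ) : gphi x ≤ Real.exp (-(x^2)/2) := by
  unfold gphi
  have h2 : (1:ℝ) ≤ Real.sqrt (2 * Real.pi) := by
    rw [show (1:ℝ) = Real.sqrt 1 by simp]
    exact Real.sqrt_le_sqrt (by nlinarith [Real.pi_gt_three])
  calc (Real.sqrt (2 * Real.pi))⁻¹ * Real.exp (-(x^2)/2)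
      ≤ 1 * Real.exp (-(x^2)/2) := by
        apply mul_le_mul_of_nonneg_right _ (Real.exp_pos _).le
        exact inv_le_one_of_one_le₀ h2
    _ = Real.exp (-(x^2)/2) := one_mul _

lemma hasDerivAt_gphi (x : ℝ) : HasDerivAt gphi (-x * gphi x) x := by
  have h1 : HasDerivAt (fun x : ℝ => -(x^2)/2) (-x) x := by
    have := ((hasDerivAt_pow 2 x).neg).div_const 2
    simpa using this.congr_deriv (by ring)
  have h2 := (h1.exp).const_mul (Real.sqrt (2 * Real.pi))⁻¹
  refine HasDerivAt.congr_deriv h2 ?_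
  unfold gphi; ring

lemma gphi_integrableOn (s : Set ℝ) : IntegrableOn gphi s := gphi_integrable.integrableOn

lemma hasStrictDerivAt_Phi (r : ℝ) : HasStrictDerivAt Phi (gphi r) r := by
  have key : ∀ u : ℝ, Phi u = Phi 0 + ∫ x in (0:ℝ)..u, gphi x := by
    intro u
    rw [← intervalIntegral.integral_Iic_sub_Iic (gphi_integrableOn _) (gphi_integrableOn _)]
    unfold Phi; ring
  have h := intervalIntegral.integral_hasStrictDerivAt_right
    (gphi_integrable.intervalIntegrable (a := 0) (b := r))
    (continuous_gphi.stronglyMeasurableAtFilter _ _)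
    (continuous_gphi.continuousAt)
  have h2 := h.const_add (Phi 0)
  exact h2.congr_of_eventuallyEq (Eventually.of_forall fun u => (key u).symm)

lemma Phi_strictMono : StrictMono Phi :=
  strictMono_of_hasDerivAt_pos (fun x => (hasStrictDerivAt_Phi x).hasDerivAt)
    (fun x => gphi_pos x)

lemma Phi_pos (x : ℝ) : 0 < Phi x := by
  unfold Phi
  rw [setIntegral_pos_iff_support_of_nonneg_ae
    (by filter_upwards with s using (gphi_pos s).le) (gphi_integrableOn _)]
  have h : (Function.support gphi) = univ := by
    ext s; simp [Function.support, (gphi_pos s).ne']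
  rw [h, univ_inter]
  simp [Real.volume_Iic]

lemma tendsto_gphi_atBot : Tendsto gphi atBot (𝓝 0) := by
  have hsq : Tendsto (fun x : ℝ => x^2) atBot atTop := by
    have h2 : Tendsto (fun x : ℝ => (-x)^2) atBot atTop :=
      (tendsto_pow_atTop two_ne_zero).comp tendsto_neg_atBot_atTop
    exact h2.congr fun x => by ring
  have h1 : Tendsto (fun x : ℝ => -(x^2)/2) atBot atBot := by
    apply Tendsto.atBot_div_const (by norm_num)
    exact tendsto_neg_atTop_atBot.comp hsq
  have h3 := (Real.tendsto_exp_atBot.comp h1).const_mul (Real.sqrt (2 * Real.pi))⁻¹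
  rw [mul_zero] at h3
  exact h3.congr fun x => rfl

lemma neg_mul_gphi_integrable : Integrable (fun s : ℝ => -s * gphi s) := by
  have h := ((integrable_mul_exp_neg_mul_sq (b := (1/2:ℝ)) (by norm_num)).const_mul
    (Real.sqrt (2 * Real.pi))⁻¹).neg
  refine h.congr ?_
  filter_upwards with x
  simp only [Pi.neg_apply]
  rw [gphi_eq]; ring

lemma integral_neg_mul_gphi (x : ℝ) : ∫ s in Iic x, -s * gphi s = gphi x := by
  have h := integral_Iic_of_hasDerivAt_of_tendsto (f := gphi)
    (f' := fun s => -s * gphi s) (a := x) (m := 0)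
    (continuous_gphi.continuousWithinAt)
    (fun s _ => hasDerivAt_gphi s)
    (neg_mul_gphi_integrable.integrableOn)
    tendsto_gphi_atBot
  simpa using h

lemma mills_upper {x : ℝ} (hx : x < 0) : Phi x ≤ gphi x / (-x) := by
  have hi : IntegrableOn (fun s => (-x)⁻¹ * (-s * gphi s)) (Iic x) :=
    (neg_mul_gphi_integrable.const_mul _).integrableOn
  have key : Phi x ≤ ∫ s in Iic x, (-x)⁻¹ * (-s * gphi s) := by
    apply setIntegral_mono_on (gphi_integrableOn _) hi measurableSet_Iic
    intro s hs
    have hs' : s ≤ x := hs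
    have h1 : 1 ≤ (-x)⁻¹ * (-s) := by
      rw [← div_eq_inv_mul, le_div_iff₀ (by linarith)]
      linarith
    nlinarith [gphi_pos s]
  rw [integral_const_mul, integral_neg_mul_gphi, div_eq_inv_mul] at *
  exact key

noncomputable def mh (s : ℝ) : ℝ := -s * gphi s / (1 + s^2)

lemma hasDerivAt_mh (s : ℝ) :
    HasDerivAt mh (gphi s * ((s^4 + 2*s^2 - 1) / (1 + s^2)^2)) s := by
  have hf : HasDerivAt (fun s : ℝ => -s * gphi s) ((s^2 - 1) * gphi s) s := by
    have := (hasDerivAt_id s).neg.mul (hasDerivAt_gphi s)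
    exact this.congr_deriv (by simp [id]; ring)
  have hg : HasDerivAt (fun s : ℝ => 1 + s^2) (2*s) s := by
    simpa using (hasDerivAt_pow 2 s).const_add 1
  have hne : (1 + s^2) ≠ 0 := by positivity
  have := hf.div hg hne
  exact this.congr_deriv (by field_simp; ring)

lemma mh_deriv_le (s : ℝ) : gphi s * ((s^4 + 2*s^2 - 1) / (1 + s^2)^2) ≤ gphi s := by
  have h1 : (s^4 + 2*s^2 - 1) ≤ (1 + s^2)^2 := by nlinarith
  have h2 : (0:ℝ) < (1 + s^2)^2 := by positivity
  have := gphi_pos s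
  rw [mul_comm]
  apply mul_le_of_le_one_left this.le
  rw [div_le_one h2]; exact h1

lemma mh_deriv_abs_le (s : ℝ) : |gphi s * ((s^4 + 2*s^2 - 1) / (1 + s^2)^2)| ≤ gphi s := by
  rw [abs_mul, abs_of_pos (gphi_pos s)]
  apply mul_le_of_le_one_right (gphi_pos s).le
  rw [abs_div, abs_of_pos (show (0:ℝ) < (1+s^2)^2 by positivity), div_le_one (by positivity)]
  rw [abs_le]
  constructor <;> nlinarith

lemma mh_deriv_integrableOn (x : ℝ) :
    IntegrableOn (fun s => gphi s * ((s^4 + 2*s^2 - 1) / (1 + s^2)^2)) (Iic x) := by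
  apply Integrable.integrableOn
  apply gphi_integrable.mono
  · apply Continuous.aestronglyMeasurable
    apply continuous_gphi.mul
    apply Continuous.div (by continuity) (by continuity)
    intro s; positivity
  · filter_upwards with s
    rw [Real.norm_eq_abs, Real.norm_eq_abs, abs_of_pos (gphi_pos s)]
    exact mh_deriv_abs_le s

lemma tendsto_mh_atBot : Tendsto mh atBot (𝓝 0) := by
  apply tendsto_of_tendsto_of_tendsto_of_le_of_le' tendsto_const_nhds tendsto_gphi_atBot
  · filter_upwards [Iic_mem_atBot (0:ℝ)] with s hs
    have := gphi_pos s
    have hs' : s ≤ 0 := hs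
    unfold mh
    apply div_nonneg _ (by positivity)
    nlinarith [gphi_pos s]
  · filter_upwards with s
    unfold mh
    rw [div_le_iff₀ (by positivity)]
    nlinarith [gphi_pos s, abs_nonneg s, sq_abs s, neg_abs_le s, sq_nonneg (|s| - 1)]

lemma mills_lower {x : ℝ} (hx : x < 0) : -x * gphi x / (1 + x^2) ≤ Phi x := by
  have key := integral_Iic_of_hasDerivAt_of_tendsto (f := mh)
    (f' := fun s => gphi s * ((s^4 + 2*s^2 - 1) / (1 + s^2)^2)) (a := x) (m := 0)
    ((hasDerivAt_mh x).continuousAt.continuousWithinAt)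
    (fun s _ => hasDerivAt_mh s)
    (mh_deriv_integrableOn x)
    tendsto_mh_atBot
  rw [sub_zero] at key
  have hle : (∫ s in Iic x, gphi s * ((s^4 + 2*s^2 - 1) / (1 + s^2)^2)) ≤ Phi x := by
    apply setIntegral_mono_on (mh_deriv_integrableOn x) (gphi_integrableOn _) measurableSet_Iic
    intro s _; exact mh_deriv_le s
  rw [key] at hle
  simpa [mh] using hle

lemma x_gphi_integrableOn (x c : ℝ) : IntegrableOn (fun s => (c - s) * gphi s) (Iic x) := by
  apply Integrable.integrableOn
  have h : Integrable (fun s : ℝ => c * gphi s + -s * gphi s) :=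
    (gphi_integrable.const_mul c).add neg_mul_gphi_integrable
  exact h.congr (by filter_upwards with s; ring)

lemma gphi_sub_eq (x : ℝ) : gphi x - (-x) * Phi x = ∫ s in Iic x, (x - s) * gphi s := by
  have h : ∫ s in Iic x, (x - s) * gphi s
      = (∫ s in Iic x, x * gphi s) + ∫ s in Iic x, -s * gphi s := by
    rw [← integral_add ((gphi_integrableOn _).const_mul x) neg_mul_gphi_integrable.integrableOn]
    congr 1; ext s; ring
  rw [h, integral_const_mul, integral_neg_mul_gphi]
  unfold Phi; ring

lemma exp_3half_lt_five : Real.exp (3/2) < 5 := by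
  have h3 : Real.exp (3/2) ^ 2 = Real.exp 3 := by
    rw [sq, ← Real.exp_add]; norm_num
  have h1 : Real.exp 3 = Real.exp 1 ^ 3 := by
    rw [← Real.exp_nat_mul]; norm_num
  have he : Real.exp 1 ^ 3 < 2.7182818286 ^ 3 :=
    pow_lt_pow_left₀ Real.exp_one_lt_d9 (Real.exp_pos 1).le (by norm_num)
  have h2 : Real.exp (3/2) ^ 2 < 5 ^ 2 := by
    rw [h3, h1]; nlinarith
  exact lt_of_pow_lt_pow_left₀ 2 (by norm_num) h2

lemma gphi_ratio {t : ℝ} (ht : 1 ≤ t) : gphi (-t) / 5 ≤ gphi (-(t + 1/t)) := by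
  have ht0 : 0 < t := by linarith
  have hsq : (-(t + 1/t))^2 = t^2 + 2 + 1/t^2 := by field_simp; ring
  have h1t : 1/t^2 ≤ 1 := by
    rw [div_le_one (by positivity)]; nlinarith
  have hexp : Real.exp (-((-t)^2)/2) / 5 ≤ Real.exp (-((-(t + 1/t))^2)/2) := by
    rw [div_le_iff₀ (by norm_num : (0:ℝ) < 5)]
    have hab : Real.exp (-((-t)^2)/2) =
        Real.exp (-((-(t + 1/t))^2)/2) * Real.exp ((-((-t)^2)/2) - (-((-(t + 1/t))^2)/2)) := by
      rw [← Real.exp_add]; ring_nf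
    rw [hab]
    apply mul_le_mul_of_nonneg_left _ (Real.exp_pos _).le
    have hd : (-((-t)^2)/2) - (-((-(t + 1/t))^2)/2) ≤ 3/2 := by
      rw [hsq, neg_sq]; linarith
    exact le_trans (Real.exp_le_exp.2 hd) exp_3half_lt_five.le
  unfold gphi
  rw [mul_div_assoc]
  exact mul_le_mul_of_nonneg_left hexp (by positivity)

lemma mills_second {x : ℝ} (hx : x ≤ -1) :
    Phi x / (20 * (-x)) ≤ gphi x - (-x) * Phi x := by
  have ht : 1 ≤ -x := by linarith
  have ht0 : 0 < -x := by linarith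
  set t : ℝ := -x with hts
  have hxt : x = -t := by rw [hts]; ring
  have hx' : x - 1/t = -(t + 1/t) := by rw [hts]; ring
  have hA := gphi_sub_eq x
  -- step B
  have hB : (∫ s in Iic (x - 1/t), (x - s) * gphi s) ≤ ∫ s in Iic x, (x - s) * gphi s := by
    apply setIntegral_mono_set (x_gphi_integrableOn x x)
    · filter_upwards [ae_restrict_mem measurableSet_Iic] with s hs
      have hsx : s ≤ x := hs
      simpa using mul_nonneg (by linarith : (0:ℝ) ≤ x - s) (gphi_pos s).le
    · apply HasSubset.Subset.eventuallyLE
      apply Iic_subset_Iic.2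
      have : 0 < 1/t := by positivity
      linarith
  -- step C
  have hC : (1/t) * Phi (x - 1/t) ≤ ∫ s in Iic (x - 1/t), (x - s) * gphi s := by
    unfold Phi
    rw [← integral_const_mul]
    apply setIntegral_mono_on ((gphi_integrableOn _).const_mul _)
      (x_gphi_integrableOn _ x) measurableSet_Iic
    intro s hs
    have hs' : s ≤ x - 1/t := hs
    have : 1/t ≤ x - s := by linarith
    nlinarith [gphi_pos s]
  -- step D
  have hu1 : (1:ℝ) ≤ t + 1/t := by
    have : 0 < 1/t := by positivity
    linarith
  have hu2 : t + 1/t ≤ 2*t := by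
    have h1 : 1/t ≤ 1 := by rw [div_le_one ht0]; exact ht
    linarith
  have hD0 := mills_lower (x := -(t + 1/t)) (by linarith)
  have hgr := gphi_ratio (t := t) ht
  have hfrac : 1/(4*t) ≤ (t + 1/t) / (1 + (t + 1/t)^2) := by
    rw [div_le_div_iff₀ (by positivity) (by positivity)]
    nlinarith [sq_nonneg (t + 1/t - 1)]
  have hD : gphi x / (20 * t) ≤ Phi (x - 1/t) := by
    rw [hx']
    calc gphi x / (20 * t) = (gphi (-t) / 5) * (1/(4*t)) := by rw [hxt]; ring
      _ ≤ gphi (-(t + 1/t)) * ((t + 1/t) / (1 + (t + 1/t)^2)) := by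
          apply mul_le_mul hgr hfrac (by positivity) (gphi_pos _).le
      _ = -(-(t + 1/t)) * gphi (-(t + 1/t)) / (1 + (-(t + 1/t))^2) := by ring_nf
      _ ≤ Phi (-(t + 1/t)) := hD0
  -- step E
  have hE := mills_upper (x := x) (by linarith)
  have hgx : t * Phi x ≤ gphi x := by
    rw [le_div_iff₀ ht0] at hE
    linarith [hE]
  -- combine
  have hPpos := Phi_pos x
  have h1 : Phi x / (20 * t) ≤ (1/t) * Phi (x - 1/t) := by
    have heq : (1/t) * (gphi x / (20 * t)) = gphi x / (20 * t * t) := by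
      field_simp
    have h2 : Phi x / (20 * t) ≤ (1/t) * (gphi x / (20 * t)) := by
      rw [heq, div_le_div_iff₀ (by positivity) (by positivity)]
      nlinarith [hgx, ht0, Phi_pos x]
    exact h2.trans (mul_le_mul_of_nonneg_left hD (by positivity))
  linarith [hA ▸ (le_trans hC hB)]

lemma gphi_neg_one_gt : 1/5 < gphi (-1) := by
  have key : Real.sqrt (2*Real.pi) * Real.exp (1/2) < 5 := by
    have hsq : (Real.sqrt (2*Real.pi) * Real.exp (1/2))^2 = 2*Real.pi * Real.exp 1 := by
      rw [mul_pow, Real.sq_sqrt (by positivity), sq, ← Real.exp_add]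
      norm_num
    have h2 : (Real.sqrt (2*Real.pi) * Real.exp (1/2))^2 < 5^2 := by
      rw [hsq]
      nlinarith [Real.pi_lt_d2, Real.exp_one_lt_d9, Real.pi_pos, (Real.exp_pos 1)]
    exact lt_of_pow_lt_pow_left₀ 2 (by norm_num) h2
  have hz : 0 < Real.sqrt (2*Real.pi) * Real.exp (1/2) := by positivity
  have h5 : (5:ℝ)⁻¹ < (Real.sqrt (2*Real.pi) * Real.exp (1/2))⁻¹ := by
    exact inv_strictAnti₀ hz key
  have heq : gphi (-1) = (Real.sqrt (2*Real.pi) * Real.exp (1/2))⁻¹ := by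
    unfold gphi
    rw [mul_inv, ← Real.exp_neg]
    norm_num
  rw [heq]
  calc (1:ℝ)/5 = (5:ℝ)⁻¹ := by norm_num
    _ < _ := h5

lemma Phi_neg_one_gt : 1/10 < Phi (-1) := by
  have h := mills_lower (x := -1) (by norm_num)
  have := gphi_neg_one_gt
  norm_num at h
  linarith

lemma Phi_lt_one_of {x : ℝ} (hx : x ≤ -1) : Phi x < 1 := by
  have h := mills_upper (x := x) (by linarith)
  have h2 : gphi x / (-x) ≤ gphi x := by
    apply div_le_self (gphi_pos x).le (by linarith)
  have h3 : gphi x ≤ Real.exp (-(x^2)/2) := gphi_le_one x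
  have h4 : Real.exp (-(x^2)/2) < 1 := by
    rw [Real.exp_lt_one_iff]
    nlinarith
  linarith

lemma continuous_Phi : Continuous Phi :=
  continuous_iff_continuousAt.2 fun r => (hasStrictDerivAt_Phi r).hasDerivAt.continuousAt

lemma exists_Phi_eq {q : ℝ} (h0 : 0 < q) (h1 : q < Phi (-1)) :
    ∃ x, x < -1 ∧ Phi x = q := by
  have hq1 : q < 1 := lt_trans h1 (Phi_lt_one_of le_rfl)
  have hlogpos : 0 < Real.log (1/q) := by
    apply Real.log_pos
    rw [lt_div_iff₀ h0]; linarith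
  set S := Real.sqrt (2 * Real.log (1/q)) with hS
  have hS0 : 0 ≤ S := Real.sqrt_nonneg _
  have hSsq : S^2 = 2 * Real.log (1/q) := Real.sq_sqrt (by linarith)
  set T := 1 + S with hT
  have hT1 : 1 ≤ T := by linarith
  have hPhiT : Phi (-T) < q := by
    have h2 := mills_upper (x := -T) (by linarith)
    have h3 : gphi (-T) / (-(-T)) ≤ gphi (-T) := by
      simp only [neg_neg]
      apply div_le_self (gphi_pos _).le hT1
    have h4 : gphi (-T) ≤ Real.exp (-((-T)^2)/2) := gphi_le_one _
    have h5 : Real.exp (-((-T)^2)/2) < q := by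
      rw [← Real.exp_log h0]
      apply Real.exp_lt_exp.2
      have hlq : Real.log (1/q) = -Real.log q := by
        rw [one_div, Real.log_inv]
      have hT2 : S^2 < T^2 := by nlinarith
      rw [neg_sq]
      nlinarith
    linarith
  have hcont : ContinuousOn Phi (Icc (-T) (-1)) := continuous_Phi.continuousOn
  have hmem : q ∈ Ioo (Phi (-T)) (Phi (-1)) := ⟨hPhiT, h1⟩
  have := intermediate_value_Ioo (by linarith : (-T:ℝ) ≤ -1) hcont hmem
  obtain ⟨x, hx, hPx⟩ := this
  exact ⟨x, hx.2, hPx⟩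

lemma PhiInv_spec {q : ℝ} (h0 : 0 < q) (h1 : q < Phi (-1)) :
    Phi (PhiInv q) = q ∧ PhiInv q < -1 := by
  obtain ⟨x, hx1, hx2⟩ := exists_Phi_eq h0 h1
  have hspec : Phi (PhiInv q) = q := Function.invFun_eq ⟨x, hx2⟩
  refine ⟨hspec, ?_⟩
  have : Phi (PhiInv q) < Phi (-1) := by rw [hspec]; exact h1
  exact Phi_strictMono.lt_iff_lt.1 this

lemma continuousAt_PhiInv {p : ℝ} (h0 : 0 < p) (h1 : p < Phi (-1)) :
    ContinuousAt PhiInv p := by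
  obtain ⟨hxp, hx1⟩ := PhiInv_spec h0 h1
  set x := PhiInv p with hxdef
  rw [Metric.continuousAt_iff]
  intro ε hε
  set ε' : ℝ := min ε (-1 - x) with hε'def
  have hε'pos : 0 < ε' := lt_min hε (by linarith)
  have hε'le : ε' ≤ ε := min_le_left _ _
  have hxε : x + ε' ≤ -1 := by
    have := min_le_right ε (-1 - x)
    simp only [hε'def]
    linarith [min_le_right ε (-1 - x)]
  set δ : ℝ := min (p - Phi (x - ε')) (Phi (x + ε') - p) with hδdef
  have hlow : Phi (x - ε') < p := by
    rw [← hxp]; exact Phi_strictMono (by linarith)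
  have hhigh : p < Phi (x + ε') := by
    rw [← hxp]; exact Phi_strictMono (by linarith)
  refine ⟨δ, lt_min (by linarith) (by linarith), ?_⟩
  intro q hq
  rw [Real.dist_eq] at hq ⊢
  have hq1 : Phi (x - ε') < q := by
    have h := abs_lt.1 hq
    have hm := min_le_left (p - Phi (x - ε')) (Phi (x + ε') - p)
    linarith [h.1]
  have hq2 : q < Phi (x + ε') := by
    have h := abs_lt.1 hq
    have := min_le_right (p - Phi (x - ε')) (Phi (x + ε') - p)
    linarith [h.2]
  have hq0 : 0 < q := lt_trans (Phi_pos _) hq1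
  have hqlt : q < Phi (-1) := lt_of_lt_of_le hq2 (Phi_strictMono.le_iff_le.2 hxε)
  obtain ⟨hPq, _⟩ := PhiInv_spec hq0 hqlt
  have hg1 : x - ε' < PhiInv q := by
    apply Phi_strictMono.lt_iff_lt.1
    rw [hPq]; exact hq1
  have hg2 : PhiInv q < x + ε' := by
    apply Phi_strictMono.lt_iff_lt.1
    rw [hPq]; exact hq2
  rw [abs_lt]
  constructor <;> [linarith; linarith]

lemma hasDerivAt_PhiInv {p : ℝ} (h0 : 0 < p) (h1 : p < Phi (-1)) :
    HasDerivAt PhiInv (gphi (PhiInv p))⁻¹ p := by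
  apply HasDerivAt.of_local_left_inverse (continuousAt_PhiInv h0 h1)
    (hasStrictDerivAt_Phi (PhiInv p)).hasDerivAt (gphi_pos _).ne'
  filter_upwards [Ioo_mem_nhds h0 h1] with q hq
  exact (PhiInv_spec hq.1 hq.2).1

lemma hasDerivAt_psiFun {p : ℝ} (h0 : 0 < p) (h1 : p < Phi (-1)) :
    HasDerivAt psiFun ((-(PhiInv p) * p - gphi (PhiInv p)) / p^2) p := by
  have hg : HasDerivAt (fun q => gphi (PhiInv q)) (-(PhiInv p)) p := by
    have hcomp := (hasDerivAt_gphi (PhiInv p)).comp p (hasDerivAt_PhiInv h0 h1)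
    refine hcomp.congr_deriv ?_
    rw [mul_assoc, mul_inv_cancel₀ (gphi_pos _).ne', mul_one]
  have hdiv := hg.div (hasDerivAt_id p) h0.ne'
  refine (hdiv.congr_deriv (by simp only [id_eq, mul_one])).congr_of_eventuallyEq ?_
  filter_upwards with q
  rfl

lemma sqrt_two_le : Real.sqrt 2 ≤ 1.45 := by
  have h := Real.sq_sqrt (by norm_num : (0:ℝ) ≤ 2)
  have h0 := Real.sqrt_nonneg 2
  nlinarith [sq_nonneg (Real.sqrt 2 - 1.45)]

set_option maxHeartbeats 2000000 in
theorem stmt14 :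
    ∃ c C : ℝ, 0 < c ∧ 0 < C ∧
      ∀ p : ℝ, 0 < p → p ≤ 0.1 →
        DifferentiableAt ℝ psiFun p ∧
          -C / (p * Real.sqrt (Real.log (1 / p))) ≤ deriv psiFun p ∧
          deriv psiFun p ≤ -c / (p * Real.sqrt (Real.log (1 / p))) := by
  refine ⟨1/29, 5, by norm_num, by norm_num, ?_⟩
  intro p hp0 hp1
  have hp1' : p < Phi (-1) := by
    have := Phi_neg_one_gt
    have hp : p ≤ 1/10 := by norm_num at hp1 ⊢; linarith
    linarith
  obtain ⟨hxp, hx1⟩ := PhiInv_spec hp0 hp1'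
  have hder := hasDerivAt_psiFun hp0 hp1'
  refine ⟨hder.differentiableAt, ?_⟩
  obtain ⟨x, hxdef⟩ : ∃ y : ℝ, PhiInv p = y := ⟨_, rfl⟩
  rw [hxdef] at hxp hx1 hder
  obtain ⟨t, htdef⟩ : ∃ y : ℝ, -x = y := ⟨_, rfl⟩
  have ht1 : 1 ≤ t := by rw [← htdef]; linarith
  have ht0 : 0 < t := by linarith
  have hx0 : x < 0 := by linarith
  have hxt : x = -t := by rw [← htdef]; ring
  have hxsq : x^2 = t^2 := by rw [hxt]; ring
  obtain ⟨φ, hφdef⟩ : ∃ y : ℝ, gphi x = y := ⟨_, rfl⟩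
  have hφ0 : 0 < φ := hφdef ▸ gphi_pos x
  have hderiv_eq : deriv psiFun p = (t * p - φ) / p^2 := by
    rw [hder.deriv, ← htdef, ← hφdef]
  -- basic Mills facts
  have hmu := mills_upper hx0
  rw [hxp, hφdef, htdef] at hmu
  have hptφ : p * t ≤ φ := by
    rw [le_div_iff₀ ht0] at hmu; exact hmu
  have hml := mills_lower hx0
  rw [hxp, hφdef, htdef] at hml
  have hml' : t * φ ≤ p * (1 + t^2) := by
    rw [div_le_iff₀ (by positivity)] at hml
    rw [← hxsq]; exact hml
  have h4 : t * (φ - t*p) ≤ p := by nlinarith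
  have hφ2tp : φ ≤ 2*t*p := by nlinarith
  have hms := mills_second (show x ≤ -1 by linarith)
  rw [hxp, hφdef, htdef] at hms
  have h3 : p ≤ 20*t*(φ - t*p) := by
    rw [div_le_iff₀ (by linarith : (0:ℝ) < 20 * t)] at hms
    nlinarith [hms]
  have hφtp_pos : 0 < φ - t*p := by nlinarith
  -- log facts
  have hlogpos : 0 < Real.log (1/p) := by
    apply Real.log_pos
    rw [lt_div_iff₀ hp0]
    have : p ≤ 1/10 := by norm_num at hp1 ⊢; linarith
    linarith [Phi_neg_one_gt]
  have hφeq : Real.log φ = -(1/2) * Real.log (2*Real.pi) - t^2/2 := by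
    rw [← hφdef]
    unfold gphi
    rw [Real.log_mul (by positivity) (Real.exp_pos _).ne', Real.log_exp,
      Real.log_inv, Real.log_sqrt (by positivity)]
    rw [hxsq]; ring
  have h2exp : φ ≤ Real.exp (-(t^2)/2) := by
    have h2 : φ ≤ Real.exp (-(x^2)/2) := hφdef ▸ gphi_le_one x
    rw [hxsq] at h2
    exact h2
  clear hder hxp hmu hml hms hp1' hxdef hφdef htdef hxt hx1 hx0 hxsq hml'
  clear x
  obtain ⟨L, hLdef⟩ : ∃ y : ℝ, Real.sqrt (Real.log (1/p)) = y := ⟨_, rfl⟩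
  have hL0 : 0 < L := hLdef ▸ Real.sqrt_pos.2 hlogpos
  -- F5 : t ≤ √2 * L
  have hple : p ≤ Real.exp (-(t^2)/2) := by
    have hpφ : p ≤ φ := by nlinarith
    linarith
  have hlog1 : t^2/2 ≤ Real.log (1/p) := by
    have := Real.log_le_log hp0 hple
    rw [Real.log_exp] at this
    rw [one_div, Real.log_inv]
    linarith
  have htL : t ≤ Real.sqrt 2 * L := by
    have h1 : t = Real.sqrt (t^2) := (Real.sqrt_sq ht0.le).symm
    rw [h1, ← hLdef, ← Real.sqrt_mul (by norm_num : (0:ℝ) ≤ 2)]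
    apply Real.sqrt_le_sqrt
    linarith
  -- F6 : L ≤ 2.5 t
  have hL25 : L ≤ 2.5 * t := by
    have hφ2t : φ / (2*t) ≤ p := by
      rw [div_le_iff₀ (by linarith : (0:ℝ) < 2*t)]
      nlinarith
    have h1p : 1/p ≤ (2*t)/φ := by
      have := one_div_le_one_div_of_le (div_pos hφ0 (by linarith : (0:ℝ) < 2*t)) hφ2t
      rwa [one_div_div] at this
    have hlog2 : Real.log (1/p) ≤ Real.log ((2*t)/φ) :=
      Real.log_le_log (one_div_pos.2 hp0) h1p
    have hlogφ := hφeq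
    have hlogdiv : Real.log ((2*t)/φ) = Real.log (2*t) - Real.log φ :=
      Real.log_div (ne_of_gt (by linarith : (0:ℝ) < 2*t)) hφ0.ne'
    have hlog2t : Real.log (2*t) ≤ 2*t := by
      linarith [Real.log_le_sub_one_of_pos (show (0:ℝ) < 2*t by linarith)]
    have hlogpi : Real.log (2*Real.pi) ≤ 5.3 := by
      have h := Real.log_le_sub_one_of_pos (show (0:ℝ) < 2*Real.pi by positivity)
      linarith [Real.pi_lt_d2]
    have htt : t ≤ t^2 := by nlinarith [sq_nonneg (t-1)]
    have htt1 : 1 ≤ t^2 := by nlinarith [sq_nonneg (t-1)]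
    have hfin : Real.log (1/p) ≤ 6.25 * t^2 := by
      rw [hlogdiv, hlogφ] at hlog2
      linarith
    have h625 : Real.sqrt (6.25 * t^2) = 2.5 * t := by
      rw [show (6.25 : ℝ) * t^2 = (2.5*t)^2 by ring, Real.sqrt_sq (by linarith : (0:ℝ) ≤ 2.5*t)]
    rw [← hLdef, ← h625]
    exact Real.sqrt_le_sqrt hfin
  -- final bounds
  have hs2 := sqrt_two_le
  have ht29 : 20 * t ≤ 29 * L := by
    have h := mul_le_mul_of_nonneg_right hs2 hL0.le
    linarith
  have key2 : p * p ≤ 29 * ((φ - t*p) * (p * L)) := by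
    calc p * p ≤ (20*t*(φ - t*p)) * p := mul_le_mul_of_nonneg_right h3 hp0.le
      _ = (20*t) * ((φ - t*p)*p) := by ring
      _ ≤ (29*L) * ((φ - t*p)*p) :=
          mul_le_mul_of_nonneg_right ht29 (mul_nonneg hφtp_pos.le hp0.le)
      _ = 29 * ((φ - t*p) * (p * L)) := by ring
  have key1 : (φ - t*p) * (p * L) ≤ 5 * p^2 := by
    calc (φ - t*p) * (p * L) ≤ (φ - t*p) * (p * (2.5*t)) := by
          apply mul_le_mul_of_nonneg_left _ hφtp_pos.le
          exact mul_le_mul_of_nonneg_left hL25 hp0.le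
      _ = 2.5 * (t * (φ - t*p)) * p := by ring
      _ ≤ 2.5 * p * p := by
          have h := mul_le_mul_of_nonneg_right h4 hp0.le
          linarith
      _ ≤ 5 * p^2 := by rw [pow_two]; nlinarith
  rw [hderiv_eq, show (1:ℝ)/p = 1/p from rfl]
  rw [show Real.sqrt (Real.log (1/p)) = L from hLdef]
  constructor
  · -- -5/(p*L) ≤ (t*p - φ)/p²
    rw [show t*p - φ = -(φ - t*p) by ring, neg_div, neg_div]
    apply neg_le_neg
    rw [div_le_div_iff₀ (pow_pos hp0 2) (mul_pos hp0 hL0)]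
    calc (φ - t*p) * (p*L) ≤ 5*p^2 := key1
      _ = 5 * p^2 := by ring
  · -- (t*p - φ)/p² ≤ -(1/29)/(p*L)
    rw [show t*p - φ = -(φ - t*p) by ring, neg_div, neg_div]
    apply neg_le_neg
    rw [div_le_div_iff₀ (mul_pos hp0 hL0) (pow_pos hp0 2)]
    nlinarith [key2]
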